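/- Let k₁, k₂ be positive integers and u: ℤ^{k₁} → ℤ^{k₂} a function. Then u admits a moderation v: ℤ^{k₁} → ℤ^{k₂}, and for any subset ℬ of ℤ^{k₁} admitting a minimal complement M in ℤ^{k₁}, the set M_v := {(x, v(x)) : x ∈ M} ⊆ ℤ^{k₁+k₂} is a minimal complement in ℤ^{k₁+k₂} of every subset X satisfying ℬ × ℤ^{k₂} ⊆ X ⊆ (ℬ × ℤ^{k₂}) ∪ ⋃_{x ∈ ℤ^{k₁} \ ℬ} ({x} × ℤ^{k₂}_{<u(x)}). Moreover, for each finite index subgroup G of ℤ^{k₂}, u admits a moderation v_G: ℤ^{k₁} → ℤ^{k₂} taking values in G, and for any set C of coset representatives of G in ℤ^{k₂}, every subset Y satisfying ℬ × G ⊆ Y ⊆ (ℬ × G) ∪ ⋃_{x ∈ ℤ^{k₁} \ ℬ} ({x} × ℤ^{k₂}_{<u(x)}) has the set M_{v_G} + ({0} × C), where M_{v_G} := {(x, v_G(x)) : x ∈ M}, as a minimal complement in ℤ^{k₁+k₂}. -/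

import Mathlib

open Pointwise

/-- `M` is a minimal additive complement of `W` in the ambient abelian group. -/
def IsMinimalComplement {G : Type*} [AddCommGroup G] (W M : Set G) : Prop :=
  W + M = Set.univ ∧ ∀ m ∈ M, W + (M \ {m}) ≠ Set.univ

/-- `v` is a moderation of `u : ℤ^{k₁} → ℤ^{k₂}`: for each `x₀`, the function
`x ↦ u(x) + v(x₀ - x)` is bounded above in `ℤ^{k₂}` with the lexicographic order. -/
def IsModeration {k₁ k₂ : ℕ} (u v : (Fin k₁ → ℤ) → (Fin k₂ → ℤ)) : Prop :=
  ∀ x₀ : Fin k₁ → ℤ, ∃ m : Lex (Fin k₂ → ℤ),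
    ∀ x : Fin k₁ → ℤ, toLex (u x + v (x₀ - x)) ≤ m

section Aux

variable {k₁ k₂ : ℕ}

private lemma lexLtOfZero (hk₂ : 0 < k₂) {a b : Fin k₂ → ℤ}
    (h : a ⟨0, hk₂⟩ < b ⟨0, hk₂⟩) : toLex a < toLex b :=
  ⟨⟨0, hk₂⟩, fun j hj => absurd hj (by simp [Fin.lt_def]), h⟩

private lemma existsModeration (hk₁ : 0 < k₁) (hk₂ : 0 < k₂)
    (u : (Fin k₁ → ℤ) → (Fin k₂ → ℤ)) (n : ℕ) (hn : 0 < n) :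
    ∃ v : (Fin k₁ → ℤ) → (Fin k₂ → ℤ), IsModeration u v ∧
      ∀ t, ∃ z : Fin k₂ → ℤ, v t = n • z := by
  set i0 : Fin k₂ := ⟨0, hk₂⟩
  have hne : (Finset.univ : Finset (Fin k₁)).Nonempty := ⟨⟨0, hk₁⟩, Finset.mem_univ _⟩
  set N : (Fin k₁ → ℤ) → ℤ := fun t => Finset.univ.sup' hne fun i => |t i| with hNdef
  have hN : ∀ t i, |t i| ≤ N t := fun t i => Finset.le_sup' (fun i => |t i|) (Finset.mem_univ i)
  have hN0 : ∀ t, 0 ≤ N t := fun t => le_trans (abs_nonneg _) (hN t ⟨0, hk₁⟩)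
  set S : (Fin k₁ → ℤ) → Finset (Fin k₁ → ℤ) :=
    fun t => Fintype.piFinset fun _ => Finset.Icc (-(2 * N t)) (2 * N t) with hSdef
  have hS : ∀ t x, (∀ i, |x i| ≤ 2 * N t) → x ∈ S t := by
    intro t x hx
    rw [hSdef, Fintype.mem_piFinset]
    intro i
    rw [Finset.mem_Icc]
    have := hx i
    rw [abs_le] at this
    exact this
  have hS0 : ∀ t, (0 : Fin k₁ → ℤ) ∈ S t := by
    intro t
    refine hS t 0 fun i => ?_
    simp only [Pi.zero_apply, abs_zero]
    have := hN0 t; linarith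
  set w : (Fin k₁ → ℤ) → ℤ :=
    fun t => max 0 ((S t).sup' ⟨0, hS0 t⟩ fun s => u s i0) with hwdef
  have hw0 : ∀ t, 0 ≤ w t := fun t => le_max_left _ _
  have hwle : ∀ t x, (∀ i, |x i| ≤ 2 * N t) → u x i0 ≤ w t := fun t x hx =>
    le_max_of_le_right (Finset.le_sup' (fun s => u s i0) (hS t x hx))
  refine ⟨fun t => Pi.single i0 (-(n * w t)), ?_, ?_⟩
  · -- moderation
    intro x₀
    refine ⟨toLex (Pi.single i0 (w x₀ + 1)), fun x => ?_⟩
    have key : u x i0 - n * w (x₀ - x) < w x₀ + 1 := by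
      by_cases hcase : ∀ i, |x i| ≤ 2 * N x₀
      · have h1 : u x i0 ≤ w x₀ := hwle x₀ x hcase
        have h2 : (0 : ℤ) ≤ n * w (x₀ - x) :=
          mul_nonneg (by positivity) (hw0 _)
        linarith
      · push_neg at hcase
        obtain ⟨i, -, hi⟩ := Finset.exists_mem_eq_sup' hne fun i => |x i|
        have hxle : ∀ j, |x j| ≤ 2 * N (x₀ - x) := by
          intro j
          have a1 : 2 * N x₀ < N x := by
            obtain ⟨i', hi'⟩ := hcase
            have := hN x i'
            linarith
          have a2 : |(x₀ - x) i| ≤ N (x₀ - x) := hN (x₀ - x) i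
          have a2' : (x₀ - x) i = x₀ i - x i := rfl
          have a3 : |x i| - |x₀ i| ≤ |x₀ i - x i| := by
            have h3 := abs_sub_abs_le_abs_sub (x i) (x₀ i)
            have h4 := abs_sub_comm (x i) (x₀ i)
            linarith
          have a4 : |x₀ i| ≤ N x₀ := hN x₀ i
          have a5 : N x = |x i| := hi
          have a6 : |x j| ≤ N x := hN x j
          rw [a2'] at a2
          linarith
        have h1 : u x i0 ≤ w (x₀ - x) := hwle _ x hxle
        have h2 : w (x₀ - x) ≤ n * w (x₀ - x) :=
          le_mul_of_one_le_left (hw0 _) (by exact_mod_cast hn)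
        have := hw0 x₀
        linarith
    refine le_of_lt (lexLtOfZero (a := u x + Pi.single i0 (-(n * w (x₀ - x))))
      (b := Pi.single i0 (w x₀ + 1)) hk₂ ?_)
    rw [Pi.add_apply, Pi.single_eq_same, Pi.single_eq_same]
    linarith
  · -- values
    intro t
    refine ⟨Pi.single i0 (-(w t)), ?_⟩
    funext j
    rcases eq_or_ne j i0 with rfl | hj
    · simp only [Pi.single_eq_same, Pi.smul_apply, smul_eq_mul, nsmul_eq_mul]
      push_cast; ring
    · simp [Pi.single_eq_of_ne hj]

private lemma mainLemma (hk₂ : 0 < k₂)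
    (u v : (Fin k₁ → ℤ) → (Fin k₂ → ℤ)) (hv : IsModeration u v)
    (G : AddSubgroup (Fin k₂ → ℤ))
    (C : Set (Fin k₂ → ℤ)) (hC : ∀ z : Fin k₂ → ℤ, ∃! c, c ∈ C ∧ z - c ∈ G)
    (cB : Lex (Fin k₂ → ℤ)) (hcB : ∀ c ∈ C, toLex c ≤ cB)
    (hGub : ∀ b : Lex (Fin k₂ → ℤ), ∃ h ∈ G, b < toLex h)
    (ℬ M : Set (Fin k₁ → ℤ)) (hM : IsMinimalComplement ℬ M)
    (Y : Set ((Fin k₁ → ℤ) × (Fin k₂ → ℤ)))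
    (h1 : ℬ ×ˢ (G : Set (Fin k₂ → ℤ)) ⊆ Y)
    (h2 : Y ⊆ (ℬ ×ˢ (G : Set (Fin k₂ → ℤ))) ∪
      {p | p.1 ∉ ℬ ∧ toLex p.2 < toLex (u p.1)}) :
    IsMinimalComplement Y
      ({p | ∃ x ∈ M, p = (x, v x)} + ({0} : Set (Fin k₁ → ℤ)) ×ˢ C) := by
  constructor
  · -- covering
    rw [Set.eq_univ_iff_forall]
    rintro ⟨a, b⟩
    have ha : a ∈ ℬ + M := hM.1 ▸ Set.mem_univ a
    obtain ⟨β, hβ, m, hm, hsum⟩ := Set.mem_add.1 ha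
    obtain ⟨c, ⟨hcC, hcG⟩, -⟩ := hC (b - v m)
    refine Set.mem_add.2 ⟨(β, b - v m - c), h1 ⟨hβ, hcG⟩, (m, v m + c),
      Set.mem_add.2 ⟨(m, v m), ⟨m, hm, rfl⟩, (0, c), ⟨rfl, hcC⟩,
        by rw [Prod.mk_add_mk, add_zero]⟩, ?_⟩
    rw [Prod.mk_add_mk]
    exact Prod.ext_iff.2 ⟨hsum, by ring⟩
  · -- minimality
    rintro p hp hcontra
    obtain ⟨q, ⟨m, hm, hq⟩, r, ⟨hr1, hr2⟩, hqr⟩ := Set.mem_add.1 hp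
    have hr1' : r.1 = (0 : Fin k₁ → ℤ) := hr1
    set c : Fin k₂ → ℤ := r.2 with hcdef
    have hre : r = ((0 : Fin k₁ → ℤ), c) := Prod.ext_iff.2 ⟨hr1', rfl⟩
    have hpe : p = (m, v m + c) := by
      rw [← hqr, hq, hre, Prod.mk_add_mk, add_zero]
    -- witness g not covered without m
    obtain ⟨g, hg⟩ := (Set.ne_univ_iff_exists_notMem _).1 (hM.2 m hm)
    obtain ⟨mb, hmb⟩ := hv g
    obtain ⟨h, hhG, hht⟩ := hGub ((mb + cB) - toLex (v m + c))
    set t : Fin k₂ → ℤ := v m + c + h with htdef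
    have htB : mb + cB < toLex t := by
      have h1' := add_lt_add_right hht (toLex (v m + c))
      have e : toLex (v m + c) + ((mb + cB) - toLex (v m + c)) = mb + cB := by abel
      rw [e] at h1'
      exact h1'
    have hmem : (g, t) ∈ Y + (({p | ∃ x ∈ M, p = (x, v x)} +
        ({0} : Set (Fin k₁ → ℤ)) ×ˢ C) \ {p}) := hcontra ▸ Set.mem_univ _
    obtain ⟨⟨x, y⟩, hxy, q', ⟨hq'mem, hq'ne⟩, hsum⟩ := Set.mem_add.1 hmem
    obtain ⟨q2, ⟨m', hm', hq2⟩, r', ⟨hr'1, hc'⟩, hq2r'⟩ := Set.mem_add.1 hq'mem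
    have hr'1' : r'.1 = (0 : Fin k₁ → ℤ) := hr'1
    have hr'e : r' = ((0 : Fin k₁ → ℤ), r'.2) := Prod.ext_iff.2 ⟨hr'1', rfl⟩
    have hq'eq : q' = (m', v m' + r'.2) := by
      rw [← hq2r', hq2, hr'e, Prod.mk_add_mk, add_zero]
    rw [hq'eq] at hsum hq'ne
    have hsum1 : x + m' = g := congrArg Prod.fst hsum
    have hsum2 : y + (v m' + r'.2) = t := congrArg Prod.snd hsum
    rcases h2 hxy with ⟨hx, hy⟩ | ⟨hx, hy⟩
    · -- x ∈ ℬ, y ∈ G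
      have hmm : m' = m := by
        by_contra hne'
        exact hg (Set.mem_add.2 ⟨x, hx, m', ⟨hm', hne'⟩, hsum1⟩)
      subst hmm
      have hyG : y ∈ G := hy
      have hdiff : c - r'.2 ∈ G := by
        have hkey : c - r'.2 = y - h := by
          have h2' : y + (v m' + r'.2) = v m' + c + h := hsum2
          linear_combination -h2'
        rw [hkey]
        exact sub_mem hyG hhG
      obtain ⟨c₀, -, huniq⟩ := hC c
      have e1 : c = c₀ := huniq c ⟨hr2, by simpa using zero_mem G⟩
      have e2 : r'.2 = c₀ := huniq r'.2 ⟨hc', hdiff⟩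
      apply hq'ne
      show (m', v m' + r'.2) = p
      rw [hpe, e2, ← e1]
    · -- x ∉ ℬ
      have hx_eq : x = g - m' := eq_sub_of_add_eq hsum1
      have hgx : g - x = m' := by rw [hx_eq]; ring
      have hb1 : toLex (u x + v m') ≤ mb := by rw [← hgx]; exact hmb x
      have e1 : y + (v m' + r'.2) = (y + v m') + r'.2 := by ring
      have e2 : toLex t = toLex (y + v m') + toLex r'.2 := by
        rw [← hsum2, e1, toLex_add]
      have l1 : toLex (y + v m') < toLex (u x + v m') := by
        rw [toLex_add, toLex_add]
        exact add_lt_add_left hy _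
      have l2 : toLex r'.2 ≤ cB := hcB _ hc'
      have hfin : toLex t < mb + cB := by
        rw [e2]
        exact add_lt_add_of_lt_of_le (lt_of_lt_of_le l1 hb1) l2
      exact absurd hfin (not_lt_of_gt htB)

end Aux

/-- For `u : ℤ^{k₁} → ℤ^{k₂}`: `u` admits a moderation `v`, and for any
`ℬ ⊆ ℤ^{k₁}` with minimal complement `M`, the graph `M_v` is a minimal complement of every
`X` with `ℬ × ℤ^{k₂} ⊆ X ⊆ (ℬ × ℤ^{k₂}) ∪ ⋃_{x ∉ ℬ} {x} × ℤ^{k₂}_{<u(x)}`. Moreover, for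
each finite index subgroup `G ≤ ℤ^{k₂}`, `u` admits a `G`-valued moderation `v_G`, and for
any set `C` of coset representatives of `G`, every `Y` with
`ℬ × G ⊆ Y ⊆ (ℬ × G) ∪ ⋃_{x ∉ ℬ} {x} × ℤ^{k₂}_{<u(x)}` has `M_{v_G} + ({0} × C)` as a
minimal complement in `ℤ^{k₁+k₂}`. -/
theorem moderation_graph_minimal_complement_k1k2
    (k₁ k₂ : ℕ) (hk₁ : 0 < k₁) (hk₂ : 0 < k₂)
    (u : (Fin k₁ → ℤ) → (Fin k₂ → ℤ)) :
    (∃ v : (Fin k₁ → ℤ) → (Fin k₂ → ℤ), IsModeration u v ∧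
      ∀ ℬ M : Set (Fin k₁ → ℤ), IsMinimalComplement ℬ M →
        ∀ X : Set ((Fin k₁ → ℤ) × (Fin k₂ → ℤ)),
          ℬ ×ˢ (Set.univ : Set (Fin k₂ → ℤ)) ⊆ X →
          X ⊆ (ℬ ×ˢ (Set.univ : Set (Fin k₂ → ℤ))) ∪
            {p | p.1 ∉ ℬ ∧ toLex p.2 < toLex (u p.1)} →
          IsMinimalComplement X {p | ∃ x ∈ M, p = (x, v x)}) ∧
    (∀ G : AddSubgroup (Fin k₂ → ℤ), G.FiniteIndex →
      ∃ vG : (Fin k₁ → ℤ) → (Fin k₂ → ℤ), IsModeration u vG ∧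
        (∀ x : Fin k₁ → ℤ, vG x ∈ G) ∧
        ∀ C : Set (Fin k₂ → ℤ),
          (∀ z : Fin k₂ → ℤ, ∃! c, c ∈ C ∧ z - c ∈ G) →
          ∀ ℬ M : Set (Fin k₁ → ℤ), IsMinimalComplement ℬ M →
            ∀ Y : Set ((Fin k₁ → ℤ) × (Fin k₂ → ℤ)),
              ℬ ×ˢ (G : Set (Fin k₂ → ℤ)) ⊆ Y →
              Y ⊆ (ℬ ×ˢ (G : Set (Fin k₂ → ℤ))) ∪
                {p | p.1 ∉ ℬ ∧ toLex p.2 < toLex (u p.1)} →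
              IsMinimalComplement Y
                ({p | ∃ x ∈ M, p = (x, vG x)} +
                  ({0} : Set (Fin k₁ → ℤ)) ×ˢ C)) := by
  constructor
  · -- Part 1
    obtain ⟨v, hv, -⟩ := existsModeration hk₁ hk₂ u 1 one_pos
    refine ⟨v, hv, ?_⟩
    intro ℬ M hM X hX1 hX2
    have hC0 : ∀ z : Fin k₂ → ℤ, ∃! c, c ∈ ({0} : Set (Fin k₂ → ℤ)) ∧ z - c ∈ (⊤ : AddSubgroup _) :=
      fun z => ⟨0, ⟨rfl, trivial⟩, fun c hc => hc.1⟩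
    have hcB0 : ∀ c ∈ ({0} : Set (Fin k₂ → ℤ)), toLex c ≤ (0 : Lex (Fin k₂ → ℤ)) := by
      rintro c rfl; exact le_refl _
    have hGub : ∀ b : Lex (Fin k₂ → ℤ), ∃ h ∈ (⊤ : AddSubgroup (Fin k₂ → ℤ)), b < toLex h := by
      intro b
      refine ⟨Pi.single ⟨0, hk₂⟩ (ofLex b ⟨0, hk₂⟩ + 1), trivial, ?_⟩
      have : toLex (ofLex b) < toLex (Pi.single ⟨0, hk₂⟩ (ofLex b ⟨0, hk₂⟩ + 1)) := by
        refine lexLtOfZero hk₂ ?_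
        rw [Pi.single_eq_same]
        exact lt_add_one _
      exact this
    have hmain := mainLemma hk₂ u v hv ⊤ {0} hC0 0 hcB0 hGub ℬ M hM X
      (by rwa [AddSubgroup.coe_top]) (by rwa [AddSubgroup.coe_top])
    have hset : ({0} : Set (Fin k₁ → ℤ)) ×ˢ ({0} : Set (Fin k₂ → ℤ)) =
        (0 : Set ((Fin k₁ → ℤ) × (Fin k₂ → ℤ))) := by
      ext ⟨a, b⟩
      simp [Prod.ext_iff]
    rwa [hset, add_zero] at hmain
  · -- Part 2
    intro G hGfi
    haveI := hGfi
    have hnpos : 0 < G.index := Nat.pos_of_ne_zero hGfi.index_ne_zero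
    obtain ⟨vG, hvG, hval⟩ := existsModeration hk₁ hk₂ u G.index hnpos
    have hmem : ∀ x, vG x ∈ G := by
      intro x
      obtain ⟨z, hz⟩ := hval x
      rw [hz]
      exact AddSubgroup.nsmul_index_mem G z
    refine ⟨vG, hvG, hmem, ?_⟩
    intro C hC ℬ M hM Y hY1 hY2
    -- C is finite, hence lex-bounded
    have hCfin : C.Finite := by
      have hinj : Set.InjOn (QuotientAddGroup.mk (s := G)) C := by
        intro a ha b hb hab
        rw [QuotientAddGroup.eq] at hab
        obtain ⟨c₀, -, huniq⟩ := hC a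
        have e1 : a = c₀ := huniq a ⟨ha, by simpa using zero_mem G⟩
        have e2 : b = c₀ := huniq b ⟨hb, by
          have : a - b = -(-a + b) := by ring
          rw [this]
          exact neg_mem hab⟩
        rw [e1, e2]
      exact Set.Finite.of_finite_image (Set.toFinite _) hinj
    have hCne : C.Nonempty := by
      obtain ⟨c, hc, -⟩ := hC 0
      exact ⟨c, hc.1⟩
    have hCne' : hCfin.toFinset.Nonempty := by
      rwa [Set.Finite.toFinset_nonempty]
    set cbf : Fin k₂ → ℤ := fun i => hCfin.toFinset.sup' hCne' fun c => c i with hcbf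
    have hcB' : ∀ c ∈ C, toLex c ≤ toLex cbf := by
      intro c hc
      have hle : c ≤ cbf := fun i =>
        Finset.le_sup' (fun c => c i) (hCfin.mem_toFinset.2 hc)
      have inst : WellFoundedLT (Fin k₂) := inferInstance
      exact Pi.toLex_monotone hle
    have hGub : ∀ b : Lex (Fin k₂ → ℤ), ∃ h ∈ G, b < toLex h := by
      intro b
      set K : ℤ := max (ofLex b ⟨0, hk₂⟩ + 1) 1 with hK
      refine ⟨G.index • Pi.single ⟨0, hk₂⟩ K, AddSubgroup.nsmul_index_mem G _, ?_⟩
      have hval0 : (G.index • Pi.single ⟨0, hk₂⟩ K : Fin k₂ → ℤ) ⟨0, hk₂⟩ =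
          (G.index : ℤ) * K := by
        rw [Pi.smul_apply, Pi.single_eq_same, nsmul_eq_mul]
      have : toLex (ofLex b) < toLex (G.index • Pi.single ⟨0, hk₂⟩ K) := by
        refine lexLtOfZero hk₂ ?_
        rw [hval0]
        have hK1 : (1 : ℤ) ≤ K := le_max_right _ _
        have hKb : ofLex b ⟨0, hk₂⟩ + 1 ≤ K := le_max_left _ _
        have hn1 : (1 : ℤ) ≤ (G.index : ℤ) := by exact_mod_cast hnpos
        nlinarith
      exact this
    exact mainLemma hk₂ u vG hvG G C hC (toLex cbf) hcB' hGub ℬ M hM Y hY1 hY2
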